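/- arXiv:2302.00568 — 3 statements merged into one kernel-verified Lean document; each statement's English description precedes it below -/
import Mathlib

section
/- Let F be a field of characteristic different from 2 and 3, let e0, e1, e2 ∈ F be pairwise distinct, and let E be the elliptic curve y² = (x−e0)(x−e1)(x−e2) over F. Let P = (x0, y0) be an affine point on E, and let γ, α, β ∈ F satisfy γ² = x0 − e0, α² = x0 − e1, β² = x0 − e2. Define x11 = x0 + αβ + γ(α+β), x12 = x0 + αβ − γ(α+β), x21 = x0 − αβ + γ(α−β), x22 = x0 − αβ − γ(α−β). Then for each x ∈ {x11, x12, x21, x22} and each y ∈ F with y² = (x−e0)(x−e1)(x−e2) and y ≠ 0, the point Q = (x, y) lies on E and the double 2·Q (in the group of points of E) is an affine point whose x-coordinate equals x0. -/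
/-!
For `Q = (x, y)` with `y ≠ 0` on `y² = f(x) = (x - e0)(x - e1)(x - e2)`, the tangent slope is
`λ = f'(x) / 2y` and `x(2Q) = λ² + (e0 + e1 + e2) - 2x`. Clearing the denominator `4y² = 4f(x)`,
`x(2Q) = x0` becomes the vanishing of the monic quartic `f'(x)² - 4 (x0 - Σ eᵢ + 2x) f(x)`.
Writing `e0 = x0 - γ²`, `e1 = x0 - α²`, `e2 = x0 - β²`, this quartic factors, as a polynomial
identity in `x, x0, γ, α, β`, into the four linear factors `x - x0 ∓ αβ ∓ γ(α ± β)`.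
-/

open WeierstrassCurve.Affine

namespace WeierstrassCurve.Affine

section CommRing

variable {R : Type*} [CommRing R]

def ofRoots (e0 e1 e2 : R) : WeierstrassCurve.Affine R :=
  ⟨0, -(e0 + e1 + e2), 0, e0 * e1 + e0 * e2 + e1 * e2, -(e0 * e1 * e2)⟩

def halvingQuartic (e0 e1 e2 x0 x : R) : R :=
  (3 * x ^ 2 - 2 * (e0 + e1 + e2) * x + (e0 * e1 + e0 * e2 + e1 * e2)) ^ 2
    - 4 * (x0 - (e0 + e1 + e2) + 2 * x) * ((x - e0) * (x - e1) * (x - e2))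

variable {e0 e1 e2 : R}

lemma ofRoots_equation_iff {x y : R} :
    (ofRoots e0 e1 e2).Equation x y ↔ y ^ 2 = (x - e0) * (x - e1) * (x - e2) := by
  rw [equation_iff]
  simp only [ofRoots]
  constructor <;> intro h <;> linear_combination h

lemma halvingQuartic_eq_prod {x0 γ α β : R}
    (hγ : γ ^ 2 = x0 - e0) (hα : α ^ 2 = x0 - e1) (hβ : β ^ 2 = x0 - e2) (x : R) :
    halvingQuartic e0 e1 e2 x0 x =
      (x - (x0 + α * β + γ * (α + β))) * (x - (x0 + α * β - γ * (α + β))) *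
        ((x - (x0 - α * β + γ * (α - β))) * (x - (x0 - α * β - γ * (α - β)))) := by
  obtain rfl : e0 = x0 - γ ^ 2 := by linear_combination hγ
  obtain rfl : e1 = x0 - α ^ 2 := by linear_combination hα
  obtain rfl : e2 = x0 - β ^ 2 := by linear_combination hβ
  unfold halvingQuartic
  ring

end CommRing

section Field

variable {F : Type*} [Field F]

lemma exists_two_smul_some_eq_some [DecidableEq F] {W : WeierstrassCurve.Affine F} {x y x' : F}
    (h : W.Nonsingular x y) (hy : y ≠ W.negY x y) (hx : W.addX x x (W.slope x x y y) = x') :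
    ∃ (y' : F) (h' : W.Nonsingular x' y'), 2 • Point.some _ _ h = Point.some _ _ h' := by
  subst hx
  exact ⟨_, _, by rw [two_smul, Point.add_self_of_Y_ne hy]⟩

variable {e0 e1 e2 x y : F}

lemma ofRoots_Y_ne_negY (h2 : (2 : F) ≠ 0) (hy0 : y ≠ 0) : y ≠ (ofRoots e0 e1 e2).negY x y := by
  simp only [negY, ofRoots, zero_mul, sub_zero]
  intro h
  exact mul_ne_zero h2 hy0 (by linear_combination h)

lemma ofRoots_nonsingular (h2 : (2 : F) ≠ 0) (hy : y ^ 2 = (x - e0) * (x - e1) * (x - e2))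
    (hy0 : y ≠ 0) : (ofRoots e0 e1 e2).Nonsingular x y := by
  rw [nonsingular_iff', ofRoots_equation_iff]
  refine ⟨hy, Or.inr ?_⟩
  simpa [ofRoots] using mul_ne_zero h2 hy0

lemma ofRoots_addX_slope_self_eq_iff [DecidableEq F] (h2 : (2 : F) ≠ 0)
    (hy : y ^ 2 = (x - e0) * (x - e1) * (x - e2)) (hy0 : y ≠ 0) (x0 : F) :
    (ofRoots e0 e1 e2).addX x x ((ofRoots e0 e1 e2).slope x x y y) = x0 ↔
      halvingQuartic e0 e1 e2 x0 x = 0 := by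
  have hslope : (ofRoots e0 e1 e2).slope x x y y =
      (3 * x ^ 2 - 2 * (e0 + e1 + e2) * x + (e0 * e1 + e0 * e2 + e1 * e2)) / (2 * y) := by
    rw [slope_of_Y_ne rfl (ofRoots_Y_ne_negY h2 hy0)]
    simp only [negY, ofRoots]
    congr 1 <;> ring
  calc (ofRoots e0 e1 e2).addX x x ((ofRoots e0 e1 e2).slope x x y y) = x0
      ↔ ((3 * x ^ 2 - 2 * (e0 + e1 + e2) * x + (e0 * e1 + e0 * e2 + e1 * e2)) / (2 * y)) ^ 2
          = x0 - (e0 + e1 + e2) + 2 * x := by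
        rw [hslope]
        simp only [addX, ofRoots]
        constructor <;> intro h <;> linear_combination h
    _ ↔ (3 * x ^ 2 - 2 * (e0 + e1 + e2) * x + (e0 * e1 + e0 * e2 + e1 * e2)) ^ 2
          = (x0 - (e0 + e1 + e2) + 2 * x) * (2 * y) ^ 2 := by
        rw [div_pow, div_eq_iff (pow_ne_zero 2 (mul_ne_zero h2 hy0))]
    _ ↔ halvingQuartic e0 e1 e2 x0 x = 0 := by
        rw [halvingQuartic, sub_eq_zero, mul_pow, hy]
        constructor <;> intro h <;> linear_combination h

end Field

end WeierstrassCurve.Affine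

open Classical in
theorem halving_formulae_general {F : Type*} [Field F] (h2 : (2 : F) ≠ 0)
    (e0 e1 e2 : F)
    (W : WeierstrassCurve.Affine F)
    (hW : W = ⟨0, -(e0 + e1 + e2), 0, e0 * e1 + e0 * e2 + e1 * e2, -(e0 * e1 * e2)⟩)
    (x0 : F)
    (γ α β : F) (hγ : γ ^ 2 = x0 - e0) (hα : α ^ 2 = x0 - e1) (hβ : β ^ 2 = x0 - e2) :
    ∀ x ∈ ({x0 + α * β + γ * (α + β), x0 + α * β - γ * (α + β),
            x0 - α * β + γ * (α - β), x0 - α * β - γ * (α - β)} : Set F),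
      ∀ y : F, y ^ 2 = (x - e0) * (x - e1) * (x - e2) → y ≠ 0 →
        ∃ (hQ : W.Nonsingular x y) (y' : F) (hP' : W.Nonsingular x0 y'),
          2 • Point.some _ _ hQ = Point.some _ _ hP' := by
  intro x hx y hy hy0
  subst hW
  have hquartic : halvingQuartic e0 e1 e2 x0 x = 0 := by
    rw [halvingQuartic_eq_prod hγ hα hβ]
    simp only [Set.mem_insert_iff, Set.mem_singleton_iff] at hx
    rcases hx with rfl | rfl | rfl | rfl <;> simp only [sub_self, zero_mul, mul_zero]
  have hQ : (ofRoots e0 e1 e2).Nonsingular x y := ofRoots_nonsingular h2 hy hy0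
  exact ⟨hQ, exists_two_smul_some_eq_some hQ (ofRoots_Y_ne_negY h2 hy0)
    ((ofRoots_addX_slope_self_eq_iff h2 hy hy0 x0).2 hquartic)⟩

open Classical in
/-- Theorem 1: halving formulae. If `γ² = x0 - e0`, `α² = x0 - e1`, `β² = x0 - e2` for an
affine point `(x0, y0)` on `y² = (x-e0)(x-e1)(x-e2)`, then each of the four listed values of
`x`, together with any nonzero `y` with `y² = (x-e0)(x-e1)(x-e2)`, gives a point `Q` on the
curve whose double is an affine point with `x`-coordinate `x0`. -/
theorem halving_formulae {F : Type*} [Field F] (h2 : (2 : F) ≠ 0) (h3 : (3 : F) ≠ 0)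
    (e0 e1 e2 : F) (h01 : e0 ≠ e1) (h02 : e0 ≠ e2) (h12 : e1 ≠ e2)
    (W : WeierstrassCurve.Affine F)
    (hW : W = ⟨0, -(e0 + e1 + e2), 0, e0 * e1 + e0 * e2 + e1 * e2, -(e0 * e1 * e2)⟩)
    (x0 y0 : F) (hP : W.Equation x0 y0)
    (γ α β : F) (hγ : γ ^ 2 = x0 - e0) (hα : α ^ 2 = x0 - e1) (hβ : β ^ 2 = x0 - e2) :
    ∀ x ∈ ({x0 + α * β + γ * (α + β), x0 + α * β - γ * (α + β),
            x0 - α * β + γ * (α - β), x0 - α * β - γ * (α - β)} : Set F),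
      ∀ y : F, y ^ 2 = (x - e0) * (x - e1) * (x - e2) → y ≠ 0 →
        ∃ (hQ : W.Nonsingular x y) (y' : F) (hP' : W.Nonsingular x0 y'),
          2 • Point.some _ _ hQ = Point.some _ _ hP' :=
  halving_formulae_general h2 e0 e1 e2 W hW x0 γ α β hγ hα hβ
end

section
/- Let e0, e1, e2 ∈ ℂ be pairwise distinct and let E be the elliptic curve y² = (x−e0)(x−e1)(x−e2) over ℂ. Let P = (x0, y0) be an affine point on E with y0 ≠ 0, and fix γ, α, β ∈ ℂ with γ² = x0 − e0, α² = x0 − e1, β² = x0 − e2. If Q = (x, y) is an affine point on E with 2·Q = P or 2·Q = −P, then x belongs to the set {x0 + αβ + γ(α+β), x0 + αβ − γ(α+β), x0 − αβ + γ(α−β), x0 − αβ − γ(α−β)}. -/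
/-!
If `2Q = ±P` then `Q` is not `2`-torsion, and the duplication formula gives
`x(2Q) · ψ₂²(x) = Φ₂(x)`, so `x` is a root of the quartic `Φ₂(X) - x₀ Ψ₂Sq(X)`.
Writing `eᵢ = x₀ - (square root)²`, this quartic factors into the four linear factors
`X - (x₀ ± αβ ± γ(α ± β))`.
-/

open Polynomial WeierstrassCurve.Affine

namespace WeierstrassCurve

/-- The curve `Y² = (X - e₀)(X - e₁)(X - e₂)`. -/
def ofRoots {R : Type*} [CommRing R] (e₀ e₁ e₂ : R) : WeierstrassCurve R :=
  ⟨0, -(e₀ + e₁ + e₂), 0, e₀ * e₁ + e₀ * e₂ + e₁ * e₂, -(e₀ * e₁ * e₂)⟩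

lemma eval_Φ_two_ofRoots_sub {R : Type*} [CommRing R] (x₀ γ α β x : R) :
    ((ofRoots (x₀ - γ ^ 2) (x₀ - α ^ 2) (x₀ - β ^ 2)).Φ 2).eval x
        - x₀ * (ofRoots (x₀ - γ ^ 2) (x₀ - α ^ 2) (x₀ - β ^ 2)).Ψ₂Sq.eval x =
      (x - (x₀ + α * β + γ * (α + β))) * (x - (x₀ + α * β - γ * (α + β)))
        * (x - (x₀ - α * β + γ * (α - β))) * (x - (x₀ - α * β - γ * (α - β))) := by
  simp only [Φ_two, Ψ₂Sq, ofRoots, b₂, b₄, b₆, b₈, eval_sub, eval_add, eval_mul, eval_pow,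
    eval_C, eval_X]
  ring

namespace Affine

lemma eval_Ψ₂Sq_eq_sq {R : Type*} [CommRing R] {W : Affine R} {x y : R} (hQ : W.Equation x y) :
    W.Ψ₂Sq.eval x = (y - W.negY x y) ^ 2 := by
  rw [equation_iff] at hQ
  simp only [Ψ₂Sq, negY, b₂, b₄, b₆, eval_add, eval_mul, eval_pow, eval_C, eval_X]
  linear_combination (-4) * hQ

variable {F : Type*} [Field F] [DecidableEq F] {W : Affine F}

lemma addX_slope_mul_eval_Ψ₂Sq {x y : F} (hQ : W.Equation x y) (hy : y ≠ W.negY x y) :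
    W.addX x x (W.slope x x y y) * W.Ψ₂Sq.eval x = (W.Φ 2).eval x := by
  have hψ : y - W.negY x y ≠ 0 := sub_ne_zero.mpr hy
  rw [eval_Ψ₂Sq_eq_sq hQ, slope_of_Y_ne rfl hy, addX, Φ_two]
  rw [equation_iff] at hQ
  simp only [eval_sub, eval_mul, eval_pow, eval_C, eval_X, b₄, b₆, b₈]
  field_simp
  rw [negY]
  linear_combination (-(W.a₁ ^ 2 + 4 * W.a₂ + 8 * x)) * hQ

lemma Point.eval_Φ_two_eq_of_two_smul_eq_some {x y x₀ y₀ : F} {hQ : W.Nonsingular x y}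
    {hP : W.Nonsingular x₀ y₀} (h : 2 • Point.some x y hQ = Point.some x₀ y₀ hP) :
    (W.Φ 2).eval x = x₀ * W.Ψ₂Sq.eval x := by
  rw [two_smul] at h
  by_cases hy : y = W.negY x y
  · rw [Point.add_self_of_Y_eq hy] at h
    exact absurd h.symm (Point.some_ne_zero hP)
  · rw [Point.add_self_of_Y_ne hy] at h
    rw [← addX_slope_mul_eval_Ψ₂Sq hQ.1 hy, (Point.some.inj h).1]

lemma Point.eval_Φ_two_eq_of_two_smul_eq_some_or_neg {x y x₀ y₀ : F} {hQ : W.Nonsingular x y}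
    {hP : W.Nonsingular x₀ y₀} (h : 2 • Point.some x y hQ = Point.some x₀ y₀ hP ∨
      2 • Point.some x y hQ = -Point.some x₀ y₀ hP) :
    (W.Φ 2).eval x = x₀ * W.Ψ₂Sq.eval x := by
  rw [Point.neg_some] at h
  exact h.elim eval_Φ_two_eq_of_two_smul_eq_some eval_Φ_two_eq_of_two_smul_eq_some

end Affine

end WeierstrassCurve

theorem halving_formulae_complete_general (e0 e1 e2 : ℂ)
    (W : WeierstrassCurve.Affine ℂ)
    (hW : W = ⟨0, -(e0 + e1 + e2), 0, e0 * e1 + e0 * e2 + e1 * e2, -(e0 * e1 * e2)⟩)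
    (x0 y0 : ℂ) (hP : W.Nonsingular x0 y0)
    (γ α β : ℂ) (hγ : γ ^ 2 = x0 - e0) (hα : α ^ 2 = x0 - e1) (hβ : β ^ 2 = x0 - e2)
    (x y : ℂ) (hQ : W.Nonsingular x y)
    (h : 2 • Point.some x y hQ = Point.some x0 y0 hP ∨ 2 • Point.some x y hQ = -Point.some x0 y0 hP) :
    x ∈ ({x0 + α * β + γ * (α + β), x0 + α * β - γ * (α + β),
          x0 - α * β + γ * (α - β), x0 - α * β - γ * (α - β)} : Set ℂ) := by
  replace hW : W = WeierstrassCurve.ofRoots e0 e1 e2 := hW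
  have hroot := WeierstrassCurve.eval_Φ_two_ofRoots_sub x0 γ α β x
  obtain rfl : e0 = x0 - γ ^ 2 := by linear_combination hγ
  obtain rfl : e1 = x0 - α ^ 2 := by linear_combination hα
  obtain rfl : e2 = x0 - β ^ 2 := by linear_combination hβ
  subst hW
  rw [Point.eval_Φ_two_eq_of_two_smul_eq_some_or_neg h, sub_self] at hroot
  simpa [sub_eq_zero, or_assoc, eq_comm] using hroot.symm

/-- Completeness part of Theorem 1: over `ℂ`, any affine point `Q = (x, y)` with
`2Q = P` or `2Q = -P` has `x`-coordinate among the four listed values. -/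
theorem halving_formulae_complete (e0 e1 e2 : ℂ) (h01 : e0 ≠ e1) (h02 : e0 ≠ e2) (h12 : e1 ≠ e2)
    (W : WeierstrassCurve.Affine ℂ)
    (hW : W = ⟨0, -(e0 + e1 + e2), 0, e0 * e1 + e0 * e2 + e1 * e2, -(e0 * e1 * e2)⟩)
    (x0 y0 : ℂ) (hP : W.Nonsingular x0 y0) (hy0 : y0 ≠ 0)
    (γ α β : ℂ) (hγ : γ ^ 2 = x0 - e0) (hα : α ^ 2 = x0 - e1) (hβ : β ^ 2 = x0 - e2)
    (x y : ℂ) (hQ : W.Nonsingular x y)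
    (h : 2 • Point.some x y hQ = Point.some x0 y0 hP ∨ 2 • Point.some x y hQ = -Point.some x0 y0 hP) :
    x ∈ ({x0 + α * β + γ * (α + β), x0 + α * β - γ * (α + β),
          x0 - α * β + γ * (α - β), x0 - α * β - γ * (α - β)} : Set ℂ) :=
  halving_formulae_complete_general e0 e1 e2 W hW x0 y0 hP γ α β hγ hα hβ x y hQ h
end

section
/- Let E be the elliptic curve y² = x³ − 36·x over ℚ and let P = (−3, 9), which is a point of E(ℚ). There is no rational point Q ∈ E(ℚ) with 2·Q = P. -/
/-!
On a curve `y² = x³ + a x² + b x` the tangent at `Q = (x, y)` has slope `(3x² + 2ax + b) / 2y`, and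
the duplication formula collapses to `x(2Q) = ((x² - b) / 2y)²`. So the `x`-coordinate of every
affine double is a square, and `-3` is not a square in `ℚ`.
-/

open WeierstrassCurve.Affine

namespace WeierstrassCurve.Affine

variable {F : Type*} [Field F] [DecidableEq F] {W : WeierstrassCurve.Affine F}

lemma addX_slope_self_eq_sq (ha₁ : W.a₁ = 0) (ha₃ : W.a₃ = 0) (ha₆ : W.a₆ = 0) {x y : F}
    (h : W.Equation x y) (hy : y ≠ W.negY x y) :
    W.addX x x (W.slope x x y y) = ((x ^ 2 - W.a₄) / (2 * y)) ^ 2 := by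
  have h2y : 2 * y ≠ 0 := by
    contrapose! hy
    simp only [negY, ha₁, ha₃]
    linear_combination hy
  obtain ⟨h2, hy0⟩ := mul_ne_zero_iff.mp h2y
  have hslope : W.slope x x y y = (3 * x ^ 2 + 2 * W.a₂ * x + W.a₄) / (2 * y) := by
    rw [slope_of_Y_ne rfl hy, negY, ha₁, ha₃]
    ring
  rw [equation_iff, ha₁, ha₃, ha₆] at h
  rw [addX, hslope, ha₁]
  field_simp
  linear_combination (-4 * (W.a₂ + 2 * x)) * h

lemma isSquare_of_two_nsmul_eq_some (ha₁ : W.a₁ = 0) (ha₃ : W.a₃ = 0) (ha₆ : W.a₆ = 0)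
    {Q : W.Point} {x y : F} {h : W.Nonsingular x y} (hQ : 2 • Q = .some x y h) : IsSquare x := by
  rw [two_nsmul] at hQ
  rcases Q with _ | @⟨x₀, y₀, h₀⟩
  · rw [← Point.zero_def, add_zero] at hQ
    exact absurd hQ.symm (Point.some_ne_zero h)
  by_cases hy : y₀ = W.negY x₀ y₀
  · exact absurd (hQ.symm.trans (Point.add_self_of_Y_eq hy)) (Point.some_ne_zero h)
  rw [Point.add_self_of_Y_ne hy, Point.some.injEq] at hQ
  rw [← hQ.1, addX_slope_self_eq_sq ha₁ ha₃ ha₆ h₀.1 hy]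
  exact IsSquare.sq _

end WeierstrassCurve.Affine

/-- Example 1: on `y² = x³ - 36x` over `ℚ`, the point `P = (-3, 9)` lies on the curve but is
not twice a rational point. -/
theorem no_rational_half_of_neg_three_nine :
    let W : WeierstrassCurve.Affine ℚ := ⟨0, 0, 0, -36, 0⟩
    ∃ hP : W.Nonsingular (-3) 9, ∀ Q : W.Point, 2 • Q ≠ Point.some _ _ hP := by
  intro W
  have hP : W.Nonsingular (-3) 9 := by
    rw [nonsingular_iff, equation_iff]
    norm_num [W]
  refine ⟨hP, fun Q hQ => ?_⟩
  have hsq : IsSquare (-3 : ℚ) := isSquare_of_two_nsmul_eq_some rfl rfl rfl hQ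
  linarith [hsq.nonneg]
end
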